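/- arXiv:1104.3950 — 4 statements merged into one kernel-verified Lean document; each statement's English description precedes it below -/
import Mathlib

section
/- For every M ≥ 3 there exists a 2-coloring of all walks from [M] to [3] such that for every walk t: [M]→[6], the set { s∘t : s: [6]→[3] a walk } is not monochromatic. -/
/-- A walk: a surjection `s : [L] → [K]` with `s(1) = 1` and
`|s(i) − s(j)| ≤ 1` whenever `|i − j| ≤ 1`. -/
def IsWalk {L K : ℕ} (s : Fin L → Fin K) : Prop :=
  Function.Surjective s ∧
    (∀ (hL : 0 < L) (hK : 0 < K), s ⟨0, hL⟩ = ⟨0, hK⟩) ∧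
    ∀ i j : Fin L, Nat.dist (i : ℕ) (j : ℕ) ≤ 1 → Nat.dist (s i : ℕ) (s j : ℕ) ≤ 1

namespace WalksNoRamseyAux

/-- DFA state: current value, whether a `2` has been seen, parity of the number of
entries into value `1` before the first `2`. -/
abbrev DState := Fin 3 × Bool × Bool

def dstep (st : DState) (c : Fin 3) : DState :=
  if c = st.1 then st
  else if c = 0 then (0, st.2.1, st.2.2)
  else if c = 1 then (1, st.2.1, if st.2.1 then st.2.2 else !st.2.2)
  else (2, true, st.2.2)

def runA (g : ℕ → Fin 3) : ℕ → DState
  | 0 => (g 0, false, false)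
  | n+1 => dstep (runA g n) (g (n+1))

def w1 : Fin 6 → Fin 3 := ![0,0,0,0,1,2]
def w2 : Fin 6 → Fin 3 := ![0,0,0,1,1,2]
def w3 : Fin 6 → Fin 3 := ![0,0,1,0,1,2]
def w4 : Fin 6 → Fin 3 := ![0,0,1,1,1,2]

def Inv (ℓ : Fin 6) (q1 q2 q3 q4 : DState) : Prop :=
  q1 = (w1 ℓ, q1.2.1, q1.2.2) ∧ q2 = (w2 ℓ, q1.2.1, q2.2.2) ∧
  q3 = (w3 ℓ, q1.2.1, q3.2.2) ∧ q4 = (w4 ℓ, q1.2.1, q4.2.2) ∧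
  (q1.2.1 = true → (q1.2.2.xor ((q2.2.2).xor ((q3.2.2).xor q4.2.2)) = true)) ∧
  (q1.2.1 = false →
    ((q1.2.2.xor ((q2.2.2).xor ((q3.2.2).xor q4.2.2)) = decide (3 ≤ (ℓ : ℕ))) ∧ ¬ ℓ = 5))

instance (ℓ : Fin 6) (q1 q2 q3 q4 : DState) : Decidable (Inv ℓ q1 q2 q3 q4) := by
  unfold Inv; infer_instance

lemma step_lemma : ∀ ℓ ℓ' : Fin 6, Nat.dist (ℓ : ℕ) (ℓ' : ℕ) ≤ 1 →
    ∀ b a1 a2 a3 a4 : Bool,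
    Inv ℓ (w1 ℓ, b, a1) (w2 ℓ, b, a2) (w3 ℓ, b, a3) (w4 ℓ, b, a4) →
    Inv ℓ' (dstep (w1 ℓ, b, a1) (w1 ℓ')) (dstep (w2 ℓ, b, a2) (w2 ℓ'))
           (dstep (w3 ℓ, b, a3) (w3 ℓ')) (dstep (w4 ℓ, b, a4) (w4 ℓ')) := by decide

lemma flag_mono : ∀ (st : DState) (x : Fin 3), st.2.1 = true → (dstep st x).2.1 = true := by
  decide

lemma hw1 : IsWalk w1 := by
  refine ⟨by decide, ?_, by decide⟩; intro hL hK; rfl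
lemma hw2 : IsWalk w2 := by
  refine ⟨by decide, ?_, by decide⟩; intro hL hK; rfl
lemma hw3 : IsWalk w3 := by
  refine ⟨by decide, ?_, by decide⟩; intro hL hK; rfl
lemma hw4 : IsWalk w4 := by
  refine ⟨by decide, ?_, by decide⟩; intro hL hK; rfl

def idx (M : ℕ) (hM : 0 < M) (n : ℕ) : Fin M := ⟨min n (M-1), by omega⟩

def colr (M : ℕ) (hM : 0 < M) (f : Fin M → Fin 3) : Fin 2 :=
  if (runA (fun n => f (idx M hM n)) (M-1)).2.2 = true then 1 else 0

def wrun (M : ℕ) (hM : 0 < M) (t : Fin M → Fin 6) (w : Fin 6 → Fin 3) (n : ℕ) : DState :=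
  runA (fun m => w (t (idx M hM m))) n

lemma main_inv (M : ℕ) (hM : 0 < M) (t : Fin M → Fin 6) (ht : IsWalk t) (n : ℕ) :
    Inv (t (idx M hM n)) (wrun M hM t w1 n) (wrun M hM t w2 n)
      (wrun M hM t w3 n) (wrun M hM t w4 n) := by
  induction n with
  | zero =>
    have h0 : t (idx M hM 0) = 0 := by
      have h1 : idx M hM 0 = ⟨0, hM⟩ := by
        apply Fin.ext; simp [idx]
      rw [h1]
      have := ht.2.1 hM (by norm_num)
      rw [this]; rfl
    show Inv (t (idx M hM 0))
      (w1 (t (idx M hM 0)), false, false) (w2 (t (idx M hM 0)), false, false)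
      (w3 (t (idx M hM 0)), false, false) (w4 (t (idx M hM 0)), false, false)
    rw [h0]; decide
  | succ n ih =>
    obtain ⟨e1, e2, e3, e4, hx1, hx2⟩ := ih
    have hdist : Nat.dist ((t (idx M hM n)) : ℕ) ((t (idx M hM (n+1))) : ℕ) ≤ 1 := by
      apply ht.2.2
      show Nat.dist (min n (M-1)) (min (n+1) (M-1)) ≤ 1
      unfold Nat.dist; omega
    have h' := step_lemma _ _ hdist (wrun M hM t w1 n).2.1 (wrun M hM t w1 n).2.2
      (wrun M hM t w2 n).2.2 (wrun M hM t w3 n).2.2 (wrun M hM t w4 n).2.2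
      (by rw [← e4, ← e3, ← e2, ← e1]; exact ⟨e1, e2, e3, e4, hx1, hx2⟩)
    show Inv (t (idx M hM (n+1)))
      (dstep (wrun M hM t w1 n) (w1 (t (idx M hM (n+1)))))
      (dstep (wrun M hM t w2 n) (w2 (t (idx M hM (n+1)))))
      (dstep (wrun M hM t w3 n) (w3 (t (idx M hM (n+1)))))
      (dstep (wrun M hM t w4 n) (w4 (t (idx M hM (n+1)))))
    rw [e1, e2, e3, e4]
    exact h'

end WalksNoRamseyAux

open WalksNoRamseyAux in
/-- For every `M ≥ 3` there is a 2-coloring of all walks from `[M]` to `[3]` such that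
for every walk `t : [M] → [6]` the set `{s ∘ t : s : [6] → [3] a walk}` is not
monochromatic. -/
theorem walks_no_ramsey (M : ℕ) (hM : 3 ≤ M) :
    ∃ c : (Fin M → Fin 3) → Fin 2, ∀ t : Fin M → Fin 6, IsWalk t →
      ¬ ∃ col : Fin 2, ∀ s : Fin 6 → Fin 3, IsWalk s → c (s ∘ t) = col := by
  have hM0 : 0 < M := by omega
  refine ⟨colr M hM0, ?_⟩
  intro t ht hmono
  obtain ⟨col, hcol⟩ := hmono
  -- a point where t attains 5
  obtain ⟨i0, hi0⟩ := ht.1 5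
  have hidx : idx M hM0 i0.val = i0 := by
    apply Fin.ext
    have := i0.isLt
    simp [idx]; omega
  have hti : t (idx M hM0 i0.val) = 5 := by rw [hidx, hi0]
  -- the seen-flag is true at time i0
  have hflag0 : (wrun M hM0 t w1 i0.val).2.1 = true := by
    obtain ⟨e1, e2, e3, e4, hx1, hx2⟩ := main_inv M hM0 t ht i0.val
    by_contra hne
    have hb : (wrun M hM0 t w1 i0.val).2.1 = false := by
      cases h : (wrun M hM0 t w1 i0.val).2.1
      · rfl
      · exact absurd h hne
    exact (hx2 hb).2 hti
  -- the flag stays true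
  have hflag : ∀ k, (wrun M hM0 t w1 (i0.val + k)).2.1 = true := by
    intro k
    induction k with
    | zero => exact hflag0
    | succ k ihk =>
      show (dstep (wrun M hM0 t w1 (i0.val + k)) (w1 (t (idx M hM0 (i0.val + k + 1))))).2.1 = true
      exact flag_mono _ _ ihk
  have hsum : i0.val + (M - 1 - i0.val) = M - 1 := by
    have := i0.isLt; omega
  have hbfin : (wrun M hM0 t w1 (M-1)).2.1 = true := by
    rw [← hsum]; exact hflag _
  obtain ⟨f1, f2, f3, f4, hx1, hx2⟩ := main_inv M hM0 t ht (M-1)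
  have hxor := hx1 hbfin
  -- the four colors
  have c1 : (if (wrun M hM0 t w1 (M-1)).2.2 = true then (1 : Fin 2) else 0) = col :=
    hcol w1 hw1
  have c2 : (if (wrun M hM0 t w2 (M-1)).2.2 = true then (1 : Fin 2) else 0) = col :=
    hcol w2 hw2
  have c3 : (if (wrun M hM0 t w3 (M-1)).2.2 = true then (1 : Fin 2) else 0) = col :=
    hcol w3 hw3
  have c4 : (if (wrun M hM0 t w4 (M-1)).2.2 = true then (1 : Fin 2) else 0) = col :=
    hcol w4 hw4
  have key : ∀ x y : Bool,
      (if x = true then (1 : Fin 2) else 0) = (if y = true then (1 : Fin 2) else 0) → x = y := by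
    decide
  have h12 := key _ _ (c1.trans c2.symm)
  have h13 := key _ _ (c1.trans c3.symm)
  have h14 := key _ _ (c1.trans c4.symm)
  rw [← h12, ← h13, ← h14] at hxor
  have hxx : ∀ x : Bool, ¬ ((x ^^ (x ^^ (x ^^ x))) = true) := by decide
  exact hxx _ hxor
end

section
/- Pigeonhole in surjective form: for every d > 0 and K ≥ 2, setting L = d(K−2)+2, for each d-coloring of all non-decreasing surjections q: [L]→[2] there exists a non-decreasing surjection q₀: [L]→[K] such that { p∘q₀ : p: [K]→[2] a non-decreasing surjection } is monochromatic. -/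
/-- Pigeonhole in surjective form: for every `d > 0` and `K ≥ 2`, with
`L = d(K−2)+2`, for each `d`-coloring of all non-decreasing surjections
`q : [L] → [2]` there is a non-decreasing surjection `q₀ : [L] → [K]` such that
`{p ∘ q₀ : p : [K] → [2] a non-decreasing surjection}` is monochromatic. -/
theorem pigeonhole_surjective (d K : ℕ) (hd : 0 < d) (hK : 2 ≤ K) :
    ∀ c : (Fin (d * (K - 2) + 2) → Fin 2) → Fin d,
      ∃ q₀ : Fin (d * (K - 2) + 2) → Fin K,
        Function.Surjective q₀ ∧ Monotone q₀ ∧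
        ∃ col : Fin d, ∀ p : Fin K → Fin 2,
          Function.Surjective p → Monotone p → c (p ∘ q₀) = col := by
  obtain ⟨n, rfl⟩ : ∃ n, K = n + 2 := ⟨K - 2, by omega⟩
  intro c
  have hL : d * (n + 2 - 2) = d * n := by simp
  -- threshold functions
  set thr : ℕ → (Fin (d * n + 2) → Fin 2) := fun t x => if t < x.val then 1 else 0 with hthr
  set g : Fin (d * n + 1) → Fin d := fun t => c (thr t.val) with hg
  obtain ⟨y, hy⟩ := Fintype.exists_lt_card_fiber_of_mul_lt_card (f := g) (n := n)
    (by simp only [Fintype.card_fin]; omega)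
  obtain ⟨S, hSsub, hScard⟩ := Finset.exists_subset_card_eq
    (s := Finset.univ.filter fun t => g t = y) (n := n + 1) (by omega)
  set e := S.orderIsoOfFin hScard with he
  set a : Fin (n + 1) → ℕ := fun i => ((e i : Fin (d * n + 1)) : ℕ) with ha
  have ha_mono : StrictMono a := fun i j hij => by
    have := (S.orderIsoOfFin hScard).strictMono hij
    exact this
  have ha_lt : ∀ i, a i < d * n + 1 := fun i => (e i : Fin (d * n + 1)).isLt
  have hcard_le : ∀ x : ℕ,
      (Finset.univ.filter fun i : Fin (n + 1) => a i < x).card ≤ n + 1 := fun x =>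
    le_trans (Finset.card_filter_le _ _) (by simp)
  set q₀ : Fin (d * n + 2) → Fin (n + 2) := fun x =>
    ⟨(Finset.univ.filter fun i : Fin (n + 1) => a i < x.val).card,
      by have := hcard_le x.val; omega⟩ with hq₀
  have key : ∀ (i : Fin (n + 1)) (x : ℕ),
      i.val < (Finset.univ.filter fun j : Fin (n + 1) => a j < x).card ↔ a i < x := by
    intro i x
    constructor
    · intro h
      by_contra hx
      push_neg at hx
      have hsub : (Finset.univ.filter fun j : Fin (n + 1) => a j < x) ⊆ Finset.Iio i := by
        intro j hj
        simp only [Finset.mem_filter, Finset.mem_univ, true_and] at hj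
        have : a j < a i := lt_of_lt_of_le hj hx
        exact Finset.mem_Iio.mpr (ha_mono.lt_iff_lt.mp this)
      have := Finset.card_le_card hsub
      rw [Fin.card_Iio] at this
      omega
    · intro h
      have hsub : Finset.Iic i ⊆ (Finset.univ.filter fun j : Fin (n + 1) => a j < x) := by
        intro j hj
        simp only [Finset.mem_filter, Finset.mem_univ, true_and]
        exact lt_of_le_of_lt (ha_mono.monotone (Finset.mem_Iic.mp hj)) h
      have := Finset.card_le_card hsub
      rw [Fin.card_Iic] at this
      omega
  refine ⟨q₀, ?_, ?_, y, ?_⟩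
  · -- surjective
    intro m
    rcases Nat.eq_zero_or_pos m.val with hm | hm
    · refine ⟨⟨0, by omega⟩, ?_⟩
      apply Fin.ext
      simp only [hq₀]
      rw [show (Finset.univ.filter fun i : Fin (n + 1) => a i < 0) = ∅ by
        simp]
      simp [hm.symm]
    · have hm1 : m.val - 1 < n + 1 := by omega
      set j : Fin (n + 1) := ⟨m.val - 1, hm1⟩ with hj
      refine ⟨⟨a j + 1, by have := ha_lt j; omega⟩, ?_⟩
      apply Fin.ext
      simp only [hq₀]
      have h1 : j.val < (Finset.univ.filter fun i : Fin (n + 1) => a i < a j + 1).card :=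
        (key j _).mpr (by omega)
      have h2 : (Finset.univ.filter fun i : Fin (n + 1) => a i < a j + 1).card ≤ j.val + 1 := by
        by_contra hc
        push_neg at hc
        rcases Nat.lt_or_ge (j.val + 1) (n + 1) with hlt | hge
        · have := (key ⟨j.val + 1, hlt⟩ (a j + 1)).mp (by simpa using hc)
          have := ha_mono (show j < ⟨j.val + 1, hlt⟩ by simp [Fin.lt_def])
          omega
        · have := hcard_le (a j + 1)
          omega
      simp only [hj] at h1 h2 ⊢
      omega
  · -- monotone
    intro x x' hxx
    simp only [hq₀, Fin.mk_le_mk]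
    apply Finset.card_le_card
    intro i hi
    simp only [Finset.mem_filter, Finset.mem_univ, true_and] at hi ⊢
    exact lt_of_lt_of_le hi hxx
  · -- monochromatic
    intro p hpsurj hpmono
    have hne : (Finset.univ.filter fun k : Fin (n + 2) => p k = 1).Nonempty := by
      obtain ⟨k, hk⟩ := hpsurj 1
      exact ⟨k, by simp [hk]⟩
    set s := Finset.min' _ hne with hs
    have hs1 : p s = 1 := (Finset.mem_filter.mp (Finset.min'_mem _ hne)).2
    have hchar : ∀ k, p k = 1 ↔ s ≤ k := by
      intro k
      constructor
      · intro hk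
        exact Finset.min'_le _ _ (by simp [hk])
      · intro hk
        have := hpmono hk
        rw [hs1] at this
        have h2 : (p k).val ≤ 1 := by omega
        have h1 : (1 : Fin 2).val ≤ (p k).val := this
        apply Fin.ext
        simp only [Fin.val_one] at h1 ⊢
        omega
    have hspos : 0 < s.val := by
      by_contra hc
      push_neg at hc
      have hs0 : s = 0 := Fin.ext (by simp only [Fin.val_zero]; omega)
      obtain ⟨k, hk⟩ := hpsurj 0
      have : p k = 1 := (hchar k).mpr (by rw [hs0]; exact Fin.zero_le k)
      rw [hk] at this
      exact absurd this (by decide)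
    have hsle : s.val - 1 < n + 1 := by have := s.isLt; omega
    set i : Fin (n + 1) := ⟨s.val - 1, hsle⟩ with hi
    have hcomp : p ∘ q₀ = thr (a i) := by
      funext x
      simp only [Function.comp_apply, hthr]
      by_cases hx : a i < x.val
      · rw [if_pos hx]
        apply (hchar _).mpr
        have := (key i x.val).mpr hx
        simp only [hq₀]
        rw [Fin.le_def]
        simp only [hi] at this ⊢
        omega
      · rw [if_neg hx]
        have hlt : ¬ s ≤ q₀ x := by
          rw [Fin.le_def]
          simp only [hq₀]
          have := (key i x.val).not.mpr hx
          push_neg at this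
          simp only [hi] at this
          omega
        have := (hchar (q₀ x)).not.mpr hlt
        have h2 : (p (q₀ x)).val ≤ 1 := by omega
        apply Fin.ext
        simp only [Fin.val_zero]
        by_contra hc
        exact this (Fin.ext (by omega))
    rw [hcomp]
    have hmem := hSsub (e i).2
    simp only [Finset.mem_filter, Finset.mem_univ, true_and, hg] at hmem
    exact hmem
end

section
/- The canonical composition of rigid surjections is associative: if v is a surjection, and s, t are rigid surjections such that both (v∘s)∘t and v∘(s∘t) are defined (as canonical compositions), then (v∘s)∘t = v∘(s∘t). -/
/-- `f`, viewed as a function `[L] → [K]` (0-based, values of interest are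
`f y` for `y < L`), is a surjection onto `[K]`. -/
def SurjOn' (L K : ℕ) (f : ℕ → ℕ) : Prop :=
  (∀ y < L, f y < K) ∧ ∀ w < K, ∃ y < L, f y = w

/-- `f : [L] → [K]` is a rigid surjection: a surjection such that the image of
every initial segment of `[L]` is an initial segment of `[K]`. -/
def RigidOn (L K : ℕ) (f : ℕ → ℕ) : Prop :=
  SurjOn' L K f ∧ ∀ y < L, ∃ x < K, ∀ w, (∃ z ≤ y, f z = w) ↔ w ≤ x

/-- The domain of the canonical composition of a function with codomain of size `L`
with the inner function `s : [N] → [M]` (`L ≤ M`): the largest `N₀ ≤ N` such that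
`s y < L` for all `y < N₀` (0-based). -/
def cdom (L N : ℕ) (s : ℕ → ℕ) : ℕ :=
  ((Finset.range N).filter (fun y => ∀ z ≤ y, s z < L)).card

lemma cdom_lt_iff (L N : ℕ) (s : ℕ → ℕ) (y : ℕ) :
    y < cdom L N s ↔ y < N ∧ ∀ z ≤ y, s z < L := by
  set S := (Finset.range N).filter (fun y => ∀ z ≤ y, s z < L) with hS
  have hdc : ∀ a b, a ≤ b → b ∈ S → a ∈ S := by
    intro a b hab hb
    simp only [hS, Finset.mem_filter, Finset.mem_range] at hb ⊢
    exact ⟨lt_of_le_of_lt hab hb.1, fun z hz => hb.2 z (hz.trans hab)⟩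
  have key : ∀ y, y ∈ S ↔ y < S.card := by
    intro y
    constructor
    · intro hy
      have hsub : Finset.range (y + 1) ⊆ S := fun a ha =>
        hdc a y (Nat.lt_succ_iff.mp (Finset.mem_range.mp ha)) hy
      have := Finset.card_le_card hsub
      simpa using this
    · intro hy
      by_contra hyS
      have hsub : S ⊆ Finset.range y := by
        intro b hb
        rw [Finset.mem_range]
        by_contra hb'
        exact hyS (hdc y b (le_of_not_gt hb') hb)
      have := Finset.card_le_card hsub
      simp at this; omega
  have : cdom L N s = S.card := rfl
  rw [this, ← key, hS]
  simp

/-- Associativity of the canonical composition: if `v : [L] → [K]` is a surjection and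
`s : [N] → [M]`, `t : [N'] → [M']` are rigid surjections such that both canonical
compositions `(v∘s)∘t` and `v∘(s∘t)` are defined, then they are equal: they have the
same domain and the same values (the value at `y` being `v (s (t y))` in both cases). -/
theorem canonical_comp_assoc (L K N M N' M' : ℕ) (v s t : ℕ → ℕ)
    (hv : SurjOn' L K v) (hs : RigidOn N M s) (ht : RigidOn N' M' t)
    (hvs : L ≤ M)                 -- v∘s is defined
    (hvst : cdom L N s ≤ M')      -- (v∘s)∘t is defined
    (hst : N ≤ M') :              -- s∘t is defined; v∘(s∘t) is defined since L ≤ M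
    cdom (cdom L N s) N' t = cdom L (cdom N N' t) (fun y => s (t y)) ∧
      ∀ y < cdom (cdom L N s) N' t, v (s (t y)) = v (s (t y)) := by
  refine ⟨?_, fun y _ => rfl⟩
  have hA : ∀ y, y < cdom (cdom L N s) N' t ↔
      y < cdom L (cdom N N' t) (fun y => s (t y)) := by
    intro y
    rw [cdom_lt_iff, cdom_lt_iff, cdom_lt_iff]
    constructor
    · rintro ⟨hy, h⟩
      refine ⟨⟨hy, fun z hz => ((cdom_lt_iff L N s (t z)).mp (h z hz)).1⟩,
        fun z hz => ((cdom_lt_iff L N s (t z)).mp (h z hz)).2 (t z) le_rfl⟩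
    · rintro ⟨⟨hy, h1⟩, h2⟩
      refine ⟨hy, fun z hz => ?_⟩
      rw [cdom_lt_iff]
      refine ⟨h1 z hz, fun w hw => ?_⟩
      obtain ⟨x, hx, hiff⟩ := ht.2 z (lt_of_le_of_lt hz hy)
      have htz : t z ≤ x := (hiff (t z)).mp ⟨z, le_rfl, rfl⟩
      obtain ⟨z', hz', hz'w⟩ := (hiff w).mpr (hw.trans htz)
      rw [← hz'w]
      exact h2 z' (hz'.trans hz)
  have h1 := hA (cdom L (cdom N N' t) fun y => s (t y))
  have h2 := hA (cdom (cdom L N s) N' t)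
  omega
end

section
/- Hales–Jewett, combined version: given d > 0, K₀ > 0, 0 < L₀ ≤ L and a surjection v₀: [L₀]→[K₀], there exists M ≥ L₀ such that for each d-coloring c of all surjections v: [M']→[K₀] with L₀ ≤ M' ≤ M and v restricted to [L₀] equal to v₀, there exists a rigid surjection s₀: [M]→[L] with s₀ the identity on [L₀] such that c(v₁∘s₀) = c(v₂∘s₀) whenever v₁, v₂: [L']→[K₀] for the same L₀ ≤ L' ≤ L both restrict to v₀ on [L₀] (where ∘ denotes canonical composition). -/
/-- Canonical representative of a function with domain `[n]`: values outside the
domain are set to `0`, so that a coloring sees only the relevant data. -/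
def restrict (n : ℕ) (f : ℕ → ℕ) : ℕ → ℕ := fun y => if y < n then f y else 0


/-!
Induction on `L`, for all finite sets of colours at once. Let `N` be the Hales–Jewett number for
`K₀` letters and the given colours, and let `σ : [M] → [L]` be given by induction for the
colouring that records, besides the colour of a word, the colours of all its extensions by at
most `N` letters. Append to `σ` the `N` coordinates of a monochromatic combinatorial line in
`[K₀]^N`: a fixed coordinate with letter `a` goes to a point of `[L₀]` where `v₀` takes the
value `a`, the moving coordinates go to the new value `L`. Then `v ∘ s₀` is `v ∘ σ` followed by
the point of the line with moving letter `v L`, and the extension colours of `v ∘ σ` do not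
depend on `v`. On level `L + 1` the colour is thus that of a point of the line; on level `L` the
canonical composition stops at the first moving coordinate, so it only reads fixed letters;
below `L` it stops inside `[M]`.
-/

open Combinatorics Function

def concat (n : ℕ) (f g : ℕ → ℕ) : ℕ → ℕ := fun y => if y < n then f y else g (y - n)

lemma concat_of_lt {n y : ℕ} (f g : ℕ → ℕ) (hy : y < n) : concat n f g y = f y := if_pos hy

lemma concat_add (n j : ℕ) (f g : ℕ → ℕ) : concat n f g (n + j) = g j := by
  simp [concat]

lemma comp_concat (n : ℕ) (f g v : ℕ → ℕ) :
    (fun y => v (concat n f g y)) = concat n (fun y => v (f y)) fun j => v (g j) := by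
  funext y
  exact apply_ite v _ _ _

lemma restrict_of_lt {n y : ℕ} (f : ℕ → ℕ) (hy : y < n) : restrict n f y = f y := if_pos hy

lemma restrict_congr {n : ℕ} {f g : ℕ → ℕ} (h : ∀ y < n, f y = g y) :
    restrict n f = restrict n g := by
  funext y
  unfold restrict
  split_ifs with hy
  exacts [h y hy, rfl]

lemma restrict_concat_congr {n m : ℕ} {f f' g g' : ℕ → ℕ} (hf : ∀ y < n, f y = f' y)
    (hg : ∀ j < m, g j = g' j) :
    restrict (n + m) (concat n f g) = restrict (n + m) (concat n f' g') := by
  refine restrict_congr fun y hy => ?_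
  unfold concat
  split_ifs with h
  exacts [hf y h, hg _ (by omega)]

section CanonicalDomain

variable {L N : ℕ} {s : ℕ → ℕ}

lemma cdom_eq_of {k : ℕ} (hk : k ≤ N) (hlt : ∀ y < k, s y < L) (hge : k < N → L ≤ s k) :
    cdom L N s = k := by
  unfold cdom
  convert Finset.card_range k using 2
  ext y
  simp only [Finset.mem_filter, Finset.mem_range]
  constructor
  · rintro ⟨hyN, hy⟩
    by_contra! hky
    exact (hy k hky).not_ge (hge (hky.trans_lt hyN))
  · exact fun hy => ⟨hy.trans_le hk, fun z hz => hlt z (hz.trans_lt hy)⟩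

lemma cdom_spec (L N : ℕ) (s : ℕ → ℕ) :
    cdom L N s ≤ N ∧ (∀ y < cdom L N s, s y < L) ∧ (cdom L N s < N → L ≤ s (cdom L N s)) := by
  classical
  have hex : ∃ k, k < N → L ≤ s k := ⟨N, fun h => absurd h N.lt_irrefl⟩
  have hle : Nat.find hex ≤ N := Nat.find_min' hex fun h => absurd h N.lt_irrefl
  have hlt : ∀ y < Nat.find hex, s y < L := fun y hy =>
    not_le.1 fun hLy => Nat.find_min hex hy fun _ => hLy
  rw [cdom_eq_of hle hlt (Nat.find_spec hex)]
  exact ⟨hle, hlt, Nat.find_spec hex⟩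

lemma cdom_lt_of_exists_le (h : ∃ y < N, L ≤ s y) : cdom L N s < N := by
  obtain ⟨y, hy, hLy⟩ := h
  by_contra! hN
  exact ((cdom_spec L N s).2.1 y (hy.trans_le hN)).not_ge hLy

lemma cdom_eq_self (h : ∀ y < N, s y < L) : cdom L N s = N :=
  cdom_eq_of le_rfl h fun h => absurd h N.lt_irrefl

end CanonicalDomain

def canonicalComp (L' M : ℕ) (s v : ℕ → ℕ) : ℕ × (ℕ → ℕ) :=
  (cdom L' M s, restrict (cdom L' M s) fun y => v (s y))

lemma canonicalComp_congr {L' M : ℕ} {s v₁ v₂ : ℕ → ℕ} (h : ∀ y < M, v₁ (s y) = v₂ (s y)) :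
    canonicalComp L' M s v₁ = canonicalComp L' M s v₂ :=
  Prod.ext rfl (restrict_congr fun y hy => h y (hy.trans_le (cdom_spec L' M s).1))

section Concat

variable {L M : ℕ} {σ : ℕ → ℕ}

lemma canonicalComp_concat_of_exists_le (h : ∃ y < M, L ≤ σ y) (N : ℕ) (t v : ℕ → ℕ) :
    canonicalComp L (M + N) (concat M σ t) v = canonicalComp L M σ v := by
  obtain ⟨-, hlt, hge⟩ := cdom_spec L M σ
  have hM : cdom L M σ < M := cdom_lt_of_exists_le h
  have hdom : cdom L (M + N) (concat M σ t) = cdom L M σ := by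
    refine cdom_eq_of (by omega) (fun y hy => ?_) fun _ => ?_
    · rw [concat_of_lt _ _ (hy.trans hM)]
      exact hlt y hy
    · rw [concat_of_lt _ _ hM]
      exact hge hM
  simp only [canonicalComp, hdom]
  exact congrArg _ (restrict_congr fun y hy => by rw [concat_of_lt _ _ (hy.trans hM)])

lemma canonicalComp_concat_of_forall_lt (h : ∀ y < M, σ y < L) (N : ℕ) (t v : ℕ → ℕ) :
    canonicalComp L (M + N) (concat M σ t) v =
      (M + cdom L N t,
        restrict (M + cdom L N t) (concat M (fun y => v (σ y)) fun j => v (t j))) := by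
  obtain ⟨hle, hlt, hge⟩ := cdom_spec L N t
  have hdom : cdom L (M + N) (concat M σ t) = M + cdom L N t := by
    refine cdom_eq_of (by omega) (fun y hy => ?_) fun hk => ?_
    · unfold concat
      split_ifs with hyM
      exacts [h y hyM, hlt _ (by omega)]
    · rw [concat_add]
      exact hge (by omega)
  simp only [canonicalComp, hdom, comp_concat]

end Concat

lemma exists_initial_segment {P : ℕ → Prop} {L a : ℕ} (hlt : ∀ w < L, P w)
    (hle : ∀ w, P w → w ≤ L) (ha : P a) : ∃ x < L + 1, ∀ w, P w ↔ w ≤ x := by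
  by_cases hL : P L
  · exact ⟨L, L.lt_succ_self, fun w =>
      ⟨hle w, fun hw => hw.lt_or_eq.elim (hlt w) fun h => h ▸ hL⟩⟩
  · have haL : a < L := (hle a ha).lt_of_ne fun h => hL (h ▸ ha)
    refine ⟨L - 1, by omega, fun w => ⟨fun hw => ?_, fun hw => hlt w (by omega)⟩⟩
    have hwL : w ≠ L := fun h => hL (h ▸ hw)
    have := hle w hw
    omega

lemma rigidOn_id (L : ℕ) : RigidOn L L fun y => y :=
  ⟨⟨fun _ hy => hy, fun w hw => ⟨w, hw, rfl⟩⟩, fun y hy =>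
    ⟨y, hy, fun _ => ⟨fun ⟨_, hz, he⟩ => he ▸ hz, fun hw => ⟨_, hw, rfl⟩⟩⟩⟩

lemma rigidOn_concat {M L N : ℕ} {σ t : ℕ → ℕ} (hσ : RigidOn M L σ) (ht : ∀ j < N, t j ≤ L)
    (htL : ∃ j < N, t j = L) : RigidOn (M + N) (L + 1) (concat M σ t) := by
  obtain ⟨⟨hσlt, hσsurj⟩, hσrig⟩ := hσ
  have hle : ∀ y < M + N, concat M σ t y ≤ L := fun y hy => by
    unfold concat
    split_ifs with h
    exacts [(hσlt y h).le, ht _ (by omega)]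
  have hold : ∀ w < L, ∃ z < M, concat M σ t z = w := fun w hw => by
    obtain ⟨z, hz, rfl⟩ := hσsurj w hw
    exact ⟨z, hz, concat_of_lt _ _ hz⟩
  refine ⟨⟨fun y hy => Nat.lt_succ_of_le (hle y hy), fun w hw => ?_⟩, fun y hy => ?_⟩
  · rcases Nat.lt_succ_iff_lt_or_eq.1 hw with hw | rfl
    · obtain ⟨z, hz, hzw⟩ := hold w hw
      exact ⟨z, by omega, hzw⟩
    · obtain ⟨j, hj, hjL⟩ := htL
      exact ⟨M + j, by omega, (concat_add M j σ t).trans hjL⟩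
  · by_cases hyM : y < M
    · obtain ⟨x, hx, hiff⟩ := hσrig y hyM
      refine ⟨x, by omega, fun w => Iff.trans ?_ (hiff w)⟩
      exact exists_congr fun z => and_congr_right fun hz => by
        rw [concat_of_lt _ _ (by omega)]
    · refine exists_initial_segment (fun w hw => ?_) (fun w ⟨z, hz, hzw⟩ => ?_) ⟨y, le_rfl, rfl⟩
      · obtain ⟨z, hz, hzw⟩ := hold w hw
        exact ⟨z, by omega, hzw⟩
      · exact hzw ▸ hle z (by omega)

section Extension

variable {K L₀ L : ℕ} {v₀ : ℕ → ℕ}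

lemma SurjOn'.of_extends (hv₀ : SurjOn' L₀ K v₀) {v : ℕ → ℕ} (hext : ∀ y < L₀, v y = v₀ y)
    (hL₀ : L₀ ≤ L) (hv : ∀ y < L, v y < K) : SurjOn' L K v := by
  refine ⟨hv, fun w hw => ?_⟩
  obtain ⟨y, hy, rfl⟩ := hv₀.2 w hw
  exact ⟨y, hy.trans_le hL₀, hext y hy⟩

lemma SurjOn'.exists_extends (hv₀ : SurjOn' L₀ K v₀) (hL₀ : 0 < L₀) (hL : L₀ ≤ L) :
    ∃ u, SurjOn' L K u ∧ ∀ y < L₀, u y = v₀ y := by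
  have hext : ∀ y < L₀, concat L₀ v₀ (fun _ => v₀ 0) y = v₀ y := fun y hy => concat_of_lt _ _ hy
  refine ⟨_, hv₀.of_extends hext hL fun y _ => ?_, hext⟩
  unfold concat
  split_ifs with hy
  exacts [hv₀.1 y hy, hv₀.1 0 hL₀]

end Extension

noncomputable def extensionColoring {κ : Type*} (K N : ℕ) (c : ℕ → (ℕ → ℕ) → κ) (n : ℕ)
    (w : ℕ → ℕ) : κ × (Fin (N + 1) → (Fin N → Fin K) → κ) :=
  (c n w, fun m x => c (n + m) (restrict (n + m) (concat n w (extend Fin.val (fun j => x j) 0))))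

lemma extensionColoring_snd {κ : Type*} {K N : ℕ} (c : ℕ → (ℕ → ℕ) → κ) (n : ℕ) (f g : ℕ → ℕ)
    (m : Fin (N + 1)) (x : Fin N → Fin K) (hg : ∀ j : Fin N, (j : ℕ) < m → g j = x j) :
    (extensionColoring K N c n (restrict n f)).2 m x =
      c (n + m) (restrict (n + m) (concat n f g)) := by
  refine congrArg _ (restrict_concat_congr (fun y hy => restrict_of_lt f hy) fun j hj => ?_)
  have hjN : j < N := by omega
  rw [hg ⟨j, hjN⟩ hj]
  exact Fin.val_injective.extend_apply (fun i => (x i : ℕ)) 0 ⟨j, hjN⟩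

noncomputable def linePositions {K N : ℕ} (ℓ : Subspace Unit (Fin K) (Fin N)) (z : Fin K → ℕ)
    (L : ℕ) : ℕ → ℕ :=
  extend Fin.val (fun j => (ℓ.idxFun j).elim z fun _ => L) 0

section LinePositions

variable {K N L : ℕ} (ℓ : Subspace Unit (Fin K) (Fin N)) {z : Fin K → ℕ}

lemma linePositions_apply (z : Fin K → ℕ) (L : ℕ) (j : Fin N) :
    linePositions ℓ z L j = (ℓ.idxFun j).elim z fun _ => L :=
  Fin.val_injective.extend_apply _ 0 j

lemma linePositions_le (hz : ∀ a, z a < L) : ∀ j < N, linePositions ℓ z L j ≤ L := by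
  intro j hj
  rw [linePositions_apply ℓ z L ⟨j, hj⟩]
  rcases ℓ.idxFun ⟨j, hj⟩ with a | _
  exacts [(hz a).le, le_rfl]

lemma exists_linePositions_eq (z : Fin K → ℕ) (L : ℕ) : ∃ j < N, linePositions ℓ z L j = L := by
  obtain ⟨j, hj⟩ := ℓ.proper ()
  exact ⟨j, j.isLt, by simp [linePositions_apply, hj]⟩

lemma comp_linePositions {v : ℕ → ℕ} (hz : ∀ a, v (z a) = a) (x : Unit → Fin K) (j : Fin N)
    (hL : linePositions ℓ z L j = L → v L = x ()) :
    v (linePositions ℓ z L j) = ℓ x j := by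
  rw [linePositions_apply] at hL ⊢
  rcases h : ℓ.idxFun j with a | _
  · rw [Subspace.apply_inl h]
    exact hz a
  · rw [h] at hL
    rw [Subspace.apply_inr h]
    exact hL rfl

lemma cdom_linePositions_lt (z : Fin K → ℕ) (L : ℕ) : cdom L N (linePositions ℓ z L) < N :=
  cdom_lt_of_exists_le <| (exists_linePositions_eq ℓ z L).imp fun _ ⟨hj, hjL⟩ => ⟨hj, hjL.ge⟩

lemma cdom_succ_linePositions (hz : ∀ a, z a < L) : cdom (L + 1) N (linePositions ℓ z L) = N :=
  cdom_eq_self fun j hj => Nat.lt_succ_of_le (linePositions_le ℓ hz j hj)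

lemma uncurry_canonicalComp_concat_linePositions {κ : Type*} (c : ℕ → (ℕ → ℕ) → κ) {L' M : ℕ}
    {σ v : ℕ → ℕ} (hσ : ∀ y < M, σ y < L') (hz : ∀ a, v (z a) = a) {m : Fin (N + 1)}
    (hm : cdom L' N (linePositions ℓ z L) = m) (x : Unit → Fin K)
    (hx : ∀ j : Fin N, (j : ℕ) < m → linePositions ℓ z L j = L → v L = x ()) :
    uncurry c (canonicalComp L' (M + N) (concat M σ (linePositions ℓ z L)) v) =
      (extensionColoring K N c M (restrict M fun y => v (σ y))).2 m (ℓ x) := by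
  rw [canonicalComp_concat_of_forall_lt hσ, hm,
    extensionColoring_snd c M _ (fun j => v (linePositions ℓ z L j)) m (ℓ x)
      fun j hj => comp_linePositions ℓ hz x j (hx j hj)]
  rfl

lemma uncurry_canonicalComp_concat_linePositions_self {κ : Type*} (c : ℕ → (ℕ → ℕ) → κ)
    {M : ℕ} {σ v : ℕ → ℕ} (hσ : ∀ y < M, σ y < L) (hz : ∀ a, v (z a) = a) (x : Unit → Fin K) :
    uncurry c (canonicalComp L (M + N) (concat M σ (linePositions ℓ z L)) v) =
      (extensionColoring K N c M (restrict M fun y => v (σ y))).2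
        ⟨cdom L N (linePositions ℓ z L), (cdom_linePositions_lt ℓ z L).trans N.lt_succ_self⟩
        (ℓ x) :=
  uncurry_canonicalComp_concat_linePositions ℓ c hσ hz rfl x fun j hj hjL =>
    absurd hjL ((cdom_spec L N _).2.1 j hj).ne

lemma uncurry_canonicalComp_concat_linePositions_succ {κ : Type*} (c : ℕ → (ℕ → ℕ) → κ)
    {M : ℕ} {σ v : ℕ → ℕ} (hσ : ∀ y < M, σ y < L) (hzL : ∀ a, z a < L)
    (hz : ∀ a, v (z a) = a) (b : Fin K) (hb : v L = b) :
    uncurry c (canonicalComp (L + 1) (M + N) (concat M σ (linePositions ℓ z L)) v) =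
      (extensionColoring K N c M (restrict M fun y => v (σ y))).2 (Fin.last N)
        (ℓ fun _ => b) :=
  uncurry_canonicalComp_concat_linePositions ℓ c (fun y hy => (hσ y hy).trans L.lt_succ_self)
    hz (cdom_succ_linePositions ℓ hzL) _ fun _ _ _ => hb

end LinePositions

def CombinedHalesJewett (K₀ L₀ L : ℕ) (v₀ : ℕ → ℕ) (κ : Type) : Prop :=
  ∃ M, L₀ ≤ M ∧ ∀ c : ℕ → (ℕ → ℕ) → κ,
    ∃ s₀ : ℕ → ℕ, RigidOn M L s₀ ∧ (∀ y < L₀, s₀ y = y) ∧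
      ∀ L' (v₁ v₂ : ℕ → ℕ), L₀ ≤ L' → L' ≤ L →
        SurjOn' L' K₀ v₁ → SurjOn' L' K₀ v₂ →
        (∀ y < L₀, v₁ y = v₀ y) → (∀ y < L₀, v₂ y = v₀ y) →
        uncurry c (canonicalComp L' M s₀ v₁) = uncurry c (canonicalComp L' M s₀ v₂)

lemma combinedHalesJewett_base (K₀ L₀ : ℕ) (v₀ : ℕ → ℕ) (κ : Type) :
    CombinedHalesJewett K₀ L₀ L₀ v₀ κ :=
  ⟨L₀, le_rfl, fun _ => ⟨fun y => y, rigidOn_id L₀, fun _ _ => rfl,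
    fun _ _ _ _ _ _ _ h₁ h₂ =>
      congrArg _ (canonicalComp_congr fun y hy => (h₁ y hy).trans (h₂ y hy).symm)⟩⟩

theorem combinedHalesJewett_succ {K₀ L₀ L : ℕ} {v₀ : ℕ → ℕ} (hL₀ : 0 < L₀)
    (hv₀ : SurjOn' L₀ K₀ v₀) (hL : L₀ ≤ L)
    (ih : ∀ (κ : Type) [Finite κ], CombinedHalesJewett K₀ L₀ L v₀ κ) (κ : Type) [Finite κ] :
    CombinedHalesJewett K₀ L₀ (L + 1) v₀ κ := by
  obtain ⟨N, hN⟩ := Subspace.exists_mono_in_high_dimension_fin (Fin K₀) κ Unit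
  obtain ⟨M, hM, hσex⟩ := ih (κ × (Fin (N + 1) → (Fin N → Fin K₀) → κ))
  refine ⟨M + N, hM.trans (Nat.le_add_right M N), fun c => ?_⟩
  obtain ⟨σ, hσ, hσid, hσc⟩ := hσex (extensionColoring K₀ N c)
  have hext : ∀ v₁ v₂ : ℕ → ℕ, SurjOn' L K₀ v₁ → SurjOn' L K₀ v₂ →
      (∀ y < L₀, v₁ y = v₀ y) → (∀ y < L₀, v₂ y = v₀ y) →
      extensionColoring K₀ N c M (restrict M fun y => v₁ (σ y)) =
        extensionColoring K₀ N c M (restrict M fun y => v₂ (σ y)) := by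
    intro v₁ v₂ hv₁ hv₂ he₁ he₂
    simpa [canonicalComp, cdom_eq_self hσ.1.1] using hσc L v₁ v₂ hL le_rfl hv₁ hv₂ he₁ he₂
  obtain ⟨u, hu, hu₀⟩ := hv₀.exists_extends hL₀ hL
  obtain ⟨ℓ, k, hk⟩ :=
    hN fun x => (extensionColoring K₀ N c M (restrict M fun y => u (σ y))).2 (Fin.last N) x
  choose z hzL₀ hz using fun a : Fin K₀ => hv₀.2 a a.isLt
  have hzL : ∀ a, z a < L := fun a => (hzL₀ a).trans_le hL
  have hzv : ∀ v : ℕ → ℕ, (∀ y < L₀, v y = v₀ y) → ∀ a, v (z a) = a :=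
    fun v hv a => (hv _ (hzL₀ a)).trans (hz a)
  refine ⟨concat M σ (linePositions ℓ z L),
    rigidOn_concat hσ (linePositions_le ℓ hzL) (exists_linePositions_eq ℓ z L),
    fun y hy => (concat_of_lt σ _ (by omega)).trans (hσid y hy), ?_⟩
  intro L' v₁ v₂ hL' hL'L hv₁ hv₂ he₁ he₂
  rcases (by omega : L' < L ∨ L' = L ∨ L' = L + 1) with h | rfl | rfl
  · obtain ⟨y, hy, hσy⟩ := hσ.1.2 L' h
    rw [canonicalComp_concat_of_exists_le ⟨y, hy, hσy.ge⟩,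
      canonicalComp_concat_of_exists_le ⟨y, hy, hσy.ge⟩]
    exact congrArg Prod.fst (hσc L' v₁ v₂ hL' h.le hv₁ hv₂ he₁ he₂)
  · let x : Unit → Fin K₀ := fun _ => ⟨v₀ 0, hv₀.1 0 hL₀⟩
    rw [uncurry_canonicalComp_concat_linePositions_self ℓ c hσ.1.1 (hzv v₁ he₁) x,
      uncurry_canonicalComp_concat_linePositions_self ℓ c hσ.1.1 (hzv v₂ he₂) x,
      hext v₁ v₂ hv₁ hv₂ he₁ he₂]
  · have hcolor : ∀ v : ℕ → ℕ, SurjOn' (L + 1) K₀ v → (∀ y < L₀, v y = v₀ y) →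
        uncurry c (canonicalComp (L + 1) (M + N) (concat M σ (linePositions ℓ z L)) v) = k := by
      intro v hv hve
      have hvL : SurjOn' L K₀ v := hv₀.of_extends hve hL fun y hy => hv.1 y (by omega)
      rw [uncurry_canonicalComp_concat_linePositions_succ ℓ c hσ.1.1 hzL (hzv v hve)
          ⟨v L, hv.1 L L.lt_succ_self⟩ rfl, hext v u hvL hu hve hu₀]
      exact hk _
    rw [hcolor v₁ hv₁ he₁, hcolor v₂ hv₂ he₂]

theorem combinedHalesJewett {K₀ L₀ L : ℕ} {v₀ : ℕ → ℕ} (hL₀ : 0 < L₀) (hv₀ : SurjOn' L₀ K₀ v₀)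
    (hL : L₀ ≤ L) (κ : Type) [Finite κ] : CombinedHalesJewett K₀ L₀ L v₀ κ := by
  induction L, hL using Nat.le_induction generalizing κ with
  | base => exact combinedHalesJewett_base K₀ L₀ v₀ κ
  | succ L hL ih => exact combinedHalesJewett_succ hL₀ hv₀ hL (fun κ _ => ih κ) κ

theorem hales_jewett_combined_general (d K₀ L₀ L : ℕ)
    (hL₀ : 0 < L₀) (hL₀L : L₀ ≤ L) (v₀ : ℕ → ℕ) (hv₀ : SurjOn' L₀ K₀ v₀) :
    ∃ M, L₀ ≤ M ∧ ∀ c : ℕ → (ℕ → ℕ) → Fin d,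
      ∃ s₀ : ℕ → ℕ, RigidOn M L s₀ ∧ (∀ y < L₀, s₀ y = y) ∧
        ∀ L' (v₁ v₂ : ℕ → ℕ), L₀ ≤ L' → L' ≤ L →
          SurjOn' L' K₀ v₁ → SurjOn' L' K₀ v₂ →
          (∀ y < L₀, v₁ y = v₀ y) → (∀ y < L₀, v₂ y = v₀ y) →
          c (cdom L' M s₀) (restrict (cdom L' M s₀) (fun y => v₁ (s₀ y))) =
            c (cdom L' M s₀) (restrict (cdom L' M s₀) (fun y => v₂ (s₀ y))) :=
  combinedHalesJewett hL₀ hv₀ hL₀L (Fin d)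

/-- Hales–Jewett, combined version: given `d > 0`, `K₀ > 0`, `0 < L₀ ≤ L` and a
surjection `v₀ : [L₀] → [K₀]`, there is `M ≥ L₀` such that for each `d`-coloring `c`
of all surjections `v : [M'] → [K₀]` with `L₀ ≤ M' ≤ M` extending `v₀`, there is a
rigid surjection `s₀ : [M] → [L]` which is the identity on `[L₀]` such that
`c(v₁ ∘ s₀) = c(v₂ ∘ s₀)` whenever `v₁, v₂ : [L'] → [K₀]` (same `L₀ ≤ L' ≤ L`) both
restrict to `v₀` on `[L₀]`; here `∘` is the canonical composition, whose domain is
`cdom L' M s₀`, and a coloring is applied to the pair (domain size, function). -/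
theorem hales_jewett_combined (d K₀ L₀ L : ℕ) (hd : 0 < d) (hK₀ : 0 < K₀)
    (hL₀ : 0 < L₀) (hL₀L : L₀ ≤ L) (v₀ : ℕ → ℕ) (hv₀ : SurjOn' L₀ K₀ v₀) :
    ∃ M, L₀ ≤ M ∧ ∀ c : ℕ → (ℕ → ℕ) → Fin d,
      ∃ s₀ : ℕ → ℕ, RigidOn M L s₀ ∧ (∀ y < L₀, s₀ y = y) ∧
        ∀ L' (v₁ v₂ : ℕ → ℕ), L₀ ≤ L' → L' ≤ L →
          SurjOn' L' K₀ v₁ → SurjOn' L' K₀ v₂ →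
          (∀ y < L₀, v₁ y = v₀ y) → (∀ y < L₀, v₂ y = v₀ y) →
          c (cdom L' M s₀) (restrict (cdom L' M s₀) (fun y => v₁ (s₀ y))) =
            c (cdom L' M s₀) (restrict (cdom L' M s₀) (fun y => v₂ (s₀ y))) :=
  hales_jewett_combined_general d K₀ L₀ L hL₀ hL₀L v₀ hv₀
end
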